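/- (No-Go Theorem for a homogeneous sub-population.) Let α, β, γ, t_p, θ_st be real constants with t_p > 0, and let ⟨θ⟩ : ℝ → ℝ be differentiable and ⟨P⟩ : ℝ → ℝ be continuous on [0, t_p], satisfying α · d⟨θ⟩/dt (t) = -⟨P⟩(t) + β·(⟨θ⟩(t) - γ) for all t ∈ [0, t_p]. Assume ⟨θ⟩(t_p) = ⟨θ⟩(0) and that the time average of ⟨θ⟩ over the protocol equals the steady-state average temperature: ∫₀^{t_p} ⟨θ⟩(t) dt = θ_st · t_p. Then the total consumed energy W_tot = ∫₀^{t_p} ⟨P⟩(t) dt equals the steady-state energy W_st(t_p) = β·(θ_st - γ)·t_p; i.e., the excess energy W_tot - W_st(t_p) is zero. -/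

import Mathlib

/-!
Integrate the dynamics over one cycle. By the fundamental theorem of calculus applied to
`α * θ`, the inertial term contributes `α (θ t_p - θ 0)`, which vanishes since the protocol
is cyclic, so the consumed energy equals `β ∫ (θ - γ)`, which the averaging hypothesis
identifies with the steady-state energy.
-/

open Set intervalIntegral

theorem integral_eq_of_linear_relaxation {a b α β γ : ℝ} {θ P : ℝ → ℝ}
    (hθ : ∀ t ∈ uIcc a b, DifferentiableAt ℝ θ t) (hP : ContinuousOn P (uIcc a b))
    (hdyn : ∀ t ∈ uIcc a b, α * deriv θ t = -P t + β * (θ t - γ)) :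
    ∫ t in a..b, P t = β * (∫ t in a..b, θ t) - β * γ * (b - a) - α * (θ b - θ a) := by
  have hθc : ContinuousOn θ (uIcc a b) := fun t ht => (hθ t ht).continuousAt.continuousWithinAt
  have hftc : ∫ t in a..b, (-P t + β * (θ t - γ)) = α * θ b - α * θ a :=
    integral_eq_sub_of_hasDerivAt (fun t ht => hdyn t ht ▸ (hθ t ht).hasDerivAt.const_mul α)
      (ContinuousOn.intervalIntegrable (by fun_prop))
  have hPi : IntervalIntegrable P MeasureTheory.volume a b := hP.intervalIntegrable
  have hθi : IntervalIntegrable θ MeasureTheory.volume a b := hθc.intervalIntegrable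
  rw [integral_add (f := fun t => -P t) hPi.neg ((hθi.sub intervalIntegrable_const).const_mul β),
    integral_neg, integral_const_mul, integral_sub hθi intervalIntegrable_const, integral_const,
    smul_eq_mul] at hftc
  linarith

/-- No-Go Theorem for a homogeneous sub-population of TCLs: under SP-1, if the
average temperature returns to its initial value after time `tp` and the time
average of the temperature equals the steady-state value `θst`, then the total
consumed energy equals the steady-state energy `β * (θst - γ) * tp`, i.e. the
excess energy is zero. -/
theorem no_go_theorem
    (α β γ tp θst : ℝ) (htp : 0 < tp)
    (θ P : ℝ → ℝ)
    (hθ : ∀ t ∈ Set.Icc (0:ℝ) tp, DifferentiableAt ℝ θ t)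
    (hP : ContinuousOn P (Set.Icc (0:ℝ) tp))
    (hdyn : ∀ t ∈ Set.Icc (0:ℝ) tp, α * deriv θ t = -P t + β * (θ t - γ))
    (hret : θ tp = θ 0)
    (havg : ∫ t in (0:ℝ)..tp, θ t = θst * tp) :
    ∫ t in (0:ℝ)..tp, P t = β * (θst - γ) * tp := by
  rw [← uIcc_of_le htp.le] at hθ hP hdyn
  rw [integral_eq_of_linear_relaxation hθ hP hdyn, havg, hret]
  ring
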